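/- arXiv:1910.00426 — 6 statements merged into one kernel-verified Lean document; each statement's English description precedes it below -/
import Mathlib

section
/- Let (X,G) and (Y,G̃) be dynamical systems on metric spaces (X,d_X) and (Y,d_Y), where G = ⟨g_i⟩_{i∈Λ} and G̃ = ⟨g̃_i⟩_{i∈Λ} are semigroups of continuous self-maps generated by indexed families, and let ρ : X → Y be a uniformly continuous homeomorphism which is a topological conjugacy. If A ⊆ X is chain transitive for G, then ρ(A) is chain transitive for G̃. -/
/-- `Ghat G` is the set `Ĝ = G ∪ {id}`. -/
def Ghat {X : Type*} (G : Set (X → X)) : Set (X → X) := insert id G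

/-- The finite composition (word) of generators indexed by the list `l`. -/
def wordOf {X : Type*} {ι : Type*} (g : ι → X → X) (l : List ι) : X → X :=
  l.foldr (fun i f => g i ∘ f) id

/-- The semigroup generated by the family `g`: all nonempty finite compositions
of the generators. -/
def genSemigroup {X : Type*} {ι : Type*} (g : ι → X → X) : Set (X → X) :=
  {f | ∃ l : List ι, l ≠ [] ∧ f = wordOf g l}

/-- An `(ε, g)`-chain from `a` to `b`: a finite sequence
`(a = x₀, …, xₙ = b; g₀, …, g_{n-1})`, `n ≥ 1`, with each `gᵢ ∈ Ĝ` and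
`d(gᵢ(g(xᵢ)), x_{i+1}) < ε` for every `i < n`. -/
def EpsChain {X : Type*} [MetricSpace X] (G : Set (X → X)) (ε : ℝ)
    (g : X → X) (a b : X) : Prop :=
  ∃ n : ℕ, 0 < n ∧ ∃ x : ℕ → X, ∃ gs : ℕ → X → X,
    x 0 = a ∧ x n = b ∧ (∀ i < n, gs i ∈ Ghat G) ∧
    ∀ i < n, dist (gs i (g (x i))) (x (i + 1)) < ε

/-- `A` is chain transitive for `G`: `A` is nonempty and for all `a, b ∈ A`,
`ε > 0` and `g ∈ G` there is an `(ε, g)`-chain from `a` to `b`. -/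
def ChainTransitiveSet {X : Type*} [MetricSpace X] (G : Set (X → X))
    (A : Set X) : Prop :=
  A.Nonempty ∧ ∀ a ∈ A, ∀ b ∈ A, ∀ ε > (0 : ℝ), ∀ g ∈ G, EpsChain G ε g a b

/-! A conjugacy carries each word in the generators of `G` to the same word in those of `G̃`,
so it maps a `(δ, g)`-chain pointwise to a chain for the corresponding word; uniform
continuity of `ρ` gives one `δ` for which every `δ`-jump becomes an `ε`-jump. -/

open Function

section Semiconj

variable {X Y ι : Type*} {ρ : X → Y} {g : ι → X → X} {gt : ι → Y → Y}

theorem semiconj_wordOf (h : ∀ i, Semiconj ρ (g i) (gt i)) (l : List ι) :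
    Semiconj ρ (wordOf g l) (wordOf gt l) := by
  induction l with
  | nil => exact Semiconj.id_right
  | cons i l ih => exact (h i).comp_right ih

theorem exists_mem_genSemigroup_semiconj (h : ∀ i, Semiconj ρ (g i) (gt i)) :
    ∀ f' ∈ genSemigroup gt, ∃ f ∈ genSemigroup g, Semiconj ρ f f' := by
  rintro _ ⟨l, hl, rfl⟩
  exact ⟨wordOf g l, ⟨l, hl, rfl⟩, semiconj_wordOf h l⟩

theorem exists_mem_ghat_genSemigroup_semiconj (h : ∀ i, Semiconj ρ (g i) (gt i)) :
    ∀ f ∈ Ghat (genSemigroup g), ∃ f' ∈ Ghat (genSemigroup gt), Semiconj ρ f f' := by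
  rintro f (rfl | ⟨l, hl, rfl⟩)
  · exact ⟨id, Set.mem_insert _ _, Semiconj.id_right⟩
  · exact ⟨wordOf gt l, Or.inr ⟨l, hl, rfl⟩, semiconj_wordOf h l⟩

end Semiconj

section ChainTransitive

variable {X Y : Type*} [MetricSpace X] [MetricSpace Y] {ρ : X → Y}
  {G : Set (X → X)} {G' : Set (Y → Y)}

theorem EpsChain.image {δ ε : ℝ} (hδ : ∀ ⦃x y⦄, dist x y < δ → dist (ρ x) (ρ y) < ε)
    (hG : ∀ h ∈ Ghat G, ∃ h' ∈ Ghat G', Semiconj ρ h h')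
    {f : X → X} {f' : Y → Y} (hf : Semiconj ρ f f') {a b : X} (hab : EpsChain G δ f a b) :
    EpsChain G' ε f' (ρ a) (ρ b) := by
  obtain ⟨n, hn, x, gs, rfl, rfl, hgs, hdist⟩ := hab
  classical
  let gs' : ℕ → Y → Y := fun i =>
    if hi : gs i ∈ Ghat G then (hG _ hi).choose else id
  have hgs' : ∀ i < n, gs' i ∈ Ghat G' ∧ Semiconj ρ (gs i) (gs' i) := fun i hi => by
    simpa only [gs', dif_pos (hgs i hi)] using (hG _ (hgs i hi)).choose_spec
  refine ⟨n, hn, ρ ∘ x, gs', rfl, rfl, fun i hi => (hgs' i hi).1, fun i hi => ?_⟩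
  have hstep : ρ (gs i (f (x i))) = gs' i (f' (ρ (x i))) := by
    rw [(hgs' i hi).2.eq, hf.eq]
  simpa only [Function.comp_apply, hstep] using hδ (hdist i hi)

theorem ChainTransitiveSet.image (hρ : UniformContinuous ρ)
    (hG : ∀ h ∈ Ghat G, ∃ h' ∈ Ghat G', Semiconj ρ h h')
    (hG' : ∀ f' ∈ G', ∃ f ∈ G, Semiconj ρ f f') {A : Set X}
    (hA : ChainTransitiveSet G A) : ChainTransitiveSet G' (ρ '' A) := by
  refine ⟨hA.1.image ρ, ?_⟩
  rintro _ ⟨a, ha, rfl⟩ _ ⟨b, hb, rfl⟩ ε hε f' hf'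
  obtain ⟨δ, hδ, hδε⟩ := Metric.uniformContinuous_iff.mp hρ ε hε
  obtain ⟨f, hf, hff'⟩ := hG' f' hf'
  exact (hA.2 a ha b hb δ hδ f hf).image hδε hG hff'

end ChainTransitive

theorem chainTransitive_image_of_uniform_conjugacy_general {X Y : Type*}
    [MetricSpace X] [MetricSpace Y] {ι : Type*}
    (g : ι → X → X) (gt : ι → Y → Y)
    (ρ : X ≃ₜ Y) (hρ : UniformContinuous ρ)
    (hconj : ∀ i, ρ ∘ g i = gt i ∘ ρ)
    (A : Set X) (hA : ChainTransitiveSet (genSemigroup g) A) :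
    ChainTransitiveSet (genSemigroup gt) (ρ '' A) := by
  have hsemi : ∀ i, Semiconj ρ (g i) (gt i) := fun i => semiconj_iff_comp_eq.mpr (hconj i)
  exact hA.image hρ (exists_mem_ghat_genSemigroup_semiconj hsemi)
    (exists_mem_genSemigroup_semiconj hsemi)

/-- Chain transitivity is preserved by a uniformly continuous topological
conjugacy: if the homeomorphism `ρ : X → Y` is uniformly continuous and
satisfies `ρ ∘ g i = g̃ i ∘ ρ` for every generator, then the image under `ρ`
of a chain transitive set for `G = ⟨g i⟩` is chain transitive for
`G̃ = ⟨g̃ i⟩`. -/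
theorem chainTransitive_image_of_uniform_conjugacy {X Y : Type*}
    [MetricSpace X] [MetricSpace Y] {ι : Type*}
    (g : ι → X → X) (gt : ι → Y → Y)
    (hcont : ∀ i, Continuous (g i)) (hcontt : ∀ i, Continuous (gt i))
    (ρ : X ≃ₜ Y) (hρ : UniformContinuous ρ)
    (hconj : ∀ i, ρ ∘ g i = gt i ∘ ρ)
    (A : Set X) (hA : ChainTransitiveSet (genSemigroup g) A) :
    ChainTransitiveSet (genSemigroup gt) (ρ '' A) :=
  chainTransitive_image_of_uniform_conjugacy_general g gt ρ hρ hconj A hA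
end

section
/- Let G be an abelian semigroup of continuous self-maps of a metric space (X,d). Then every chain component of G is invariant under G; in particular, for every x in a chain component C and every g ∈ G, the point g(x) is chain recurrent, g(x) is chain equivalent to x, and g(x) ∈ C. -/
/-- `x` is a chain recurrent point for `G`: for every `ε > 0` and `g ∈ G`
there is an `(ε, g)`-chain from `x` to itself. -/
def ChainRecurrentPt {X : Type*} [MetricSpace X] (G : Set (X → X)) (x : X) : Prop :=
  ∀ ε > (0 : ℝ), ∀ g ∈ G, EpsChain G ε g x x

/-- `a` and `b` are chain equivalent for `G`: for every `ε > 0` and `g ∈ G`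
there are `(ε, g)`-chains from `a` to `b` and from `b` to `a`. -/
def ChainEquivPts {X : Type*} [MetricSpace X] (G : Set (X → X)) (a b : X) : Prop :=
  ∀ ε > (0 : ℝ), ∀ g ∈ G, EpsChain G ε g a b ∧ EpsChain G ε g b a

/-- `C` is a chain component of `G`: an equivalence class of the chain
equivalence relation on the chain recurrent set. -/
def IsChainComponent {X : Type*} [MetricSpace X] (G : Set (X → X)) (C : Set X) : Prop :=
  ∃ x : X, ChainRecurrentPt G x ∧
    C = {y | ChainRecurrentPt G y ∧ ChainEquivPts G x y}

/-!
Writing an `(ε, g)`-chain as a path of single links `f (g a) ≈ b` (`f ∈ Ĝ`), the proof is two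
surgeries on a chain from `x` to itself. Since `h ∘ g = g ∘ h`, the first link of an
`(ε, h ∘ g)`-chain from `x` starts the `(ε, h)`-chain at `g x`, and every later link
`f (h (g y))` is the link `(f ∘ g) (h y)`; so `g x` chains back to `x`. By continuity of `g`,
post-composing the last map of a fine enough `(δ, h)`-chain from `x` to `x` with `g` ends it
`ε`-close to `g x`. Hence `g x` is chain equivalent to `x`, so to everything in its component.
-/

open Relation

section

variable {X : Type*} {G : Set (X → X)}

theorem comp_mem_Ghat (hcomp : ∀ f ∈ G, ∀ g ∈ G, f ∘ g ∈ G) {f g : X → X}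
    (hf : f ∈ Ghat G) (hg : g ∈ Ghat G) : f ∘ g ∈ Ghat G := by
  rcases hf with rfl | hf
  · exact hg
  rcases hg with rfl | hg
  · exact Set.mem_insert_of_mem _ hf
  · exact Set.mem_insert_of_mem _ (hcomp f hf g hg)

end

section

variable {X : Type*} [MetricSpace X] {G : Set (X → X)} {ε : ℝ} {g h : X → X} {a b : X}

def ChainStep (G : Set (X → X)) (ε : ℝ) (g : X → X) (a b : X) : Prop :=
  ∃ f ∈ Ghat G, dist (f (g a)) b < ε

theorem ChainStep.mono_eps {ε' : ℝ} (hεε' : ε ≤ ε') (hab : ChainStep G ε g a b) :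
    ChainStep G ε' g a b :=
  let ⟨f, hf, hd⟩ := hab
  ⟨f, hf, hd.trans_le hεε'⟩

theorem EpsChain.transGen (hab : EpsChain G ε g a b) : TransGen (ChainStep G ε g) a b := by
  obtain ⟨n, hn, x, gs, rfl, rfl, hgs, hdist⟩ := hab
  suffices ∀ k, 0 < k → k ≤ n → TransGen (ChainStep G ε g) (x 0) (x k) from
    this n hn le_rfl
  intro k hk hkn
  induction k with
  | zero => exact absurd hk (lt_irrefl 0)
  | succ k ih =>
    have hstep : ChainStep G ε g (x k) (x (k + 1)) :=
      ⟨gs k, hgs k (by omega), hdist k (by omega)⟩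
    rcases Nat.eq_zero_or_pos k with rfl | hk
    · exact .single hstep
    · exact (ih hk (by omega)).tail hstep

theorem EpsChain.of_transGen (hab : TransGen (ChainStep G ε g) a b) : EpsChain G ε g a b := by
  induction hab with
  | single hstep =>
    obtain ⟨f, hf, hd⟩ := hstep
    exact ⟨1, one_pos, fun i => if i = 0 then a else _, fun _ => f, rfl, rfl,
      fun _ _ => hf, fun i hi => by rw [Nat.lt_one_iff.mp hi]; simpa using hd⟩
  | @tail b c _ hstep ih =>
    obtain ⟨n, hn, x, gs, hx0, rfl, hgs, hdist⟩ := ih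
    obtain ⟨f, hf, hd⟩ := hstep
    refine ⟨n + 1, n.succ_pos, Function.update x (n + 1) c, Function.update gs n f,
      by simpa using hx0, by simp, fun i hi => ?_, fun i hi => ?_⟩
    · rcases eq_or_ne i n with rfl | hin
      · simpa using hf
      · simpa [hin] using hgs i (by omega)
    · rcases eq_or_ne i n with rfl | hin
      · simpa using hd
      · rw [Function.update_of_ne hin, Function.update_of_ne (by omega),
          Function.update_of_ne (by omega)]
        exact hdist i (by omega)

theorem EpsChain.trans {c : X} (hab : EpsChain G ε g a b) (hbc : EpsChain G ε g b c) :
    EpsChain G ε g a c :=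
  .of_transGen (hab.transGen.trans hbc.transGen)

theorem ChainStep.of_comp (hcomp : ∀ f ∈ G, ∀ g ∈ G, f ∘ g ∈ G) (hg : g ∈ G)
    (hgh : g ∘ h = h ∘ g) (hab : ChainStep G ε (h ∘ g) a b) : ChainStep G ε h a b := by
  obtain ⟨f, hf, hd⟩ := hab
  have hcomm : g (h a) = h (g a) := congrFun hgh a
  exact ⟨f ∘ g, comp_mem_Ghat hcomp hf (Set.mem_insert_of_mem _ hg),
    by simpa only [Function.comp_apply, hcomm] using hd⟩

theorem EpsChain.apply_source_of_comp (hcomp : ∀ f ∈ G, ∀ g ∈ G, f ∘ g ∈ G)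
    (hg : g ∈ G) (hgh : g ∘ h = h ∘ g) (hab : EpsChain G ε (h ∘ g) a b) :
    EpsChain G ε h (g a) b := by
  obtain ⟨c, hac, hcb⟩ := TransGen.head'_iff.mp hab.transGen
  -- a link of `h ∘ g` out of `a` is literally a link of `h` out of `g a`
  exact .of_transGen
    (.head' hac (ReflTransGen.mono (fun _ _ => ChainStep.of_comp hcomp hg hgh) _ _ hcb))

theorem EpsChain.apply_target_of_forall (hcomp : ∀ f ∈ G, ∀ g ∈ G, f ∘ g ∈ G)
    (hg : g ∈ G) (hgb : ContinuousAt g b) (hε : 0 < ε) (hab : ∀ δ > 0, EpsChain G δ h a b) :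
    EpsChain G ε h a (g b) := by
  obtain ⟨δ, hδ, hgδ⟩ := Metric.continuousAt_iff.mp hgb ε hε
  obtain ⟨c, hac, f, hf, hcb⟩ :=
    TransGen.tail'_iff.mp (hab (min ε δ) (lt_min hε hδ)).transGen
  have hlast : ChainStep G ε h c (g b) :=
    ⟨g ∘ f, comp_mem_Ghat hcomp (Set.mem_insert_of_mem _ hg) hf,
      hgδ (hcb.trans_le (min_le_right ε δ))⟩
  exact .of_transGen
    (.tail' (ReflTransGen.mono (fun _ _ => .mono_eps (min_le_left ε δ)) _ _ hac) hlast)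

end

/-- For an abelian semigroup `G` of continuous self-maps of a metric space,
every chain component `C` is invariant under `G`: for `x ∈ C` and `g ∈ G`,
the point `g(x)` is chain recurrent, chain equivalent to `x`, and lies in `C`. -/
theorem chainComponent_invariant {X : Type*} [MetricSpace X]
    (G : Set (X → X)) (hcont : ∀ g ∈ G, Continuous g)
    (hcomp : ∀ f ∈ G, ∀ g ∈ G, f ∘ g ∈ G)
    (habel : ∀ f ∈ G, ∀ g ∈ G, f ∘ g = g ∘ f)
    (C : Set X) (hC : IsChainComponent G C) :
    ∀ x ∈ C, ∀ g ∈ G, ChainRecurrentPt G (g x) ∧ ChainEquivPts G (g x) x ∧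
      g x ∈ C := by
  obtain ⟨x₀, -, rfl⟩ := hC
  rintro x ⟨hx, hx₀x⟩ g hg
  have to_x : ∀ ε > 0, ∀ h ∈ G, EpsChain G ε h (g x) x := fun ε hε h hh =>
    (hx ε hε (h ∘ g) (hcomp h hh g hg)).apply_source_of_comp hcomp hg (habel g hg h hh)
  have from_x : ∀ ε > 0, ∀ h ∈ G, EpsChain G ε h x (g x) := fun ε hε h hh =>
    .apply_target_of_forall hcomp hg (hcont g hg).continuousAt hε fun δ hδ => hx δ hδ h hh
  have hgx : ChainRecurrentPt G (g x) := fun ε hε h hh =>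
    (to_x ε hε h hh).trans (from_x ε hε h hh)
  refine ⟨hgx, fun ε hε h hh => ⟨to_x ε hε h hh, from_x ε hε h hh⟩, hgx,
    fun ε hε h hh => ?_⟩
  obtain ⟨hx₀_to_x, hx_to_x₀⟩ := hx₀x ε hε h hh
  exact ⟨hx₀_to_x.trans (from_x ε hε h hh), (to_x ε hε h hh).trans hx_to_x₀⟩
end

section
/- Let G be a semigroup of continuous self-maps of a metric space (X,d) generated by a family {g_α}, and let A be the attractor determined by a trapping region U for G. Then A is invariant under G: for every z ∈ A and every g ∈ G, we have g(z) ∈ A. -/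
open Filter Topology

/-- `IterWord g0 n hs` is the composition
`hs 0 ∘ g0 ∘ hs 1 ∘ g0 ∘ ⋯ ∘ hs (n-1) ∘ g0 ∘ hs n`, containing exactly `n`
occurrences of `g0` interleaved with the maps `hs i`. -/
def IterWord {X : Type*} (g0 : X → X) : ℕ → (ℕ → (X → X)) → (X → X)
  | 0, hs => hs 0
  | n + 1, hs => hs 0 ∘ g0 ∘ IterWord g0 n (fun i => hs (i + 1))

/-- A sequence `f` in `G` is unbounded (with respect to the generating family
`gα`): there is a fixed generator `g0 = gα i₀` and indices `n k → ∞` such that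
each `f k` is a composition containing exactly `n k` occurrences of `g0`
interleaved with elements of `Ĝ`. -/
def UnboundedSeq {X : Type*} {ι : Type*} (G : Set (X → X)) (gα : ι → X → X)
    (f : ℕ → X → X) : Prop :=
  (∀ k, f k ∈ G) ∧
    ∃ i₀ : ι, ∃ n : ℕ → ℕ, Tendsto n atTop atTop ∧
      ∀ k, ∃ hs : ℕ → X → X, (∀ i, hs i ∈ Ghat G) ∧
        f k = IterWord (gα i₀) (n k) hs

/-- `U` is a trapping region for `G` relative to `h ∈ G`:
`U` is open and nonempty and, with `Ũ = {f(h(x)) : x ∈ U, f ∈ Ĝ}`,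
one has `cl(Ũ) ⊆ U`. -/
def IsTrappingRegion {X : Type*} [MetricSpace X] (G : Set (X → X))
    (U : Set X) (h : X → X) : Prop :=
  IsOpen U ∧ U.Nonempty ∧ h ∈ G ∧
    closure {y | ∃ x ∈ U, ∃ f ∈ Ghat G, y = f (h x)} ⊆ U

/-- The attractor determined by the trapping region `U` (with associated map
`h ∈ G`): the set of points `x` such that every open set `V ∋ x` meets
`f_k(h(U))` for infinitely many `k`, for some unbounded sequence `(f_k)`. -/
def AttractorOf {X : Type*} [MetricSpace X] {ι : Type*} (G : Set (X → X))
    (gα : ι → X → X) (U : Set X) (h : X → X) : Set X :=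
  {x | ∀ V : Set X, IsOpen V → x ∈ V →
    ∃ f : ℕ → X → X, UnboundedSeq G gα f ∧
      {k : ℕ | (V ∩ f k '' (h '' U)).Nonempty}.Infinite}

/-- `z` is an `ω`-limit point of `x`: `f k x → z` for some unbounded
sequence `(f k)` in `G`. -/
def OmegaLimit {X : Type*} [MetricSpace X] {ι : Type*} (G : Set (X → X))
    (gα : ι → X → X) (x : X) : Set X :=
  {z | ∃ f : ℕ → X → X, UnboundedSeq G gα f ∧
    Tendsto (fun k => f k x) atTop (𝓝 z)}

/-- The basin of attraction of `A`: points whose `ω`-limit set meets `A`. -/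
def BasinOf {X : Type*} [MetricSpace X] {ι : Type*} (G : Set (X → X))
    (gα : ι → X → X) (A : Set X) : Set X :=
  {x | (OmegaLimit G gα x ∩ A).Nonempty}

theorem comp_iterWord {X : Type*} (g g0 : X → X) (n : ℕ) (hs : ℕ → X → X) :
    g ∘ IterWord g0 n hs = IterWord g0 n (Function.update hs 0 (g ∘ hs 0)) := by
  cases n with
  | zero => simp [IterWord]
  | succ m =>
    have htail : (fun i => Function.update hs 0 (g ∘ hs 0) (i + 1)) = fun i => hs (i + 1) :=
      funext fun i => Function.update_of_ne (Nat.succ_ne_zero i) _ _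
    simp only [IterWord, htail, Function.update_self]
    rfl

section Semigroup

variable {X : Type*} {G : Set (X → X)} (hcomp : ∀ f ∈ G, ∀ g ∈ G, f ∘ g ∈ G)
include hcomp

theorem comp_mem_of_mem_ghat {g f : X → X} (hg : g ∈ G) (hf : f ∈ Ghat G) : g ∘ f ∈ G := by
  rcases hf with rfl | hf
  · exact hg
  · exact hcomp g hg f hf

theorem UnboundedSeq.comp_left {ι : Type*} {gα : ι → X → X} {f : ℕ → X → X}
    (hf : UnboundedSeq G gα f) {g : X → X} (hg : g ∈ G) :
    UnboundedSeq G gα (fun k => g ∘ f k) := by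
  obtain ⟨hfG, i₀, n, hn, hrep⟩ := hf
  refine ⟨fun k => hcomp g hg (f k) (hfG k), i₀, n, hn, fun k => ?_⟩
  obtain ⟨hs, hhs, hfk⟩ := hrep k
  refine ⟨Function.update hs 0 (g ∘ hs 0), fun i => ?_, by simp only [hfk, comp_iterWord]⟩
  rcases eq_or_ne i 0 with rfl | hi
  · rw [Function.update_self]
    exact Or.inr (comp_mem_of_mem_ghat hcomp hg (hhs 0))
  · rw [Function.update_of_ne hi]
    exact hhs i

end Semigroup

theorem attractor_invariant_general {X : Type*} [MetricSpace X] {ι : Type*}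
    (G : Set (X → X)) (gα : ι → X → X)
    (hcont : ∀ g ∈ G, Continuous g)
    (hcomp : ∀ f ∈ G, ∀ g ∈ G, f ∘ g ∈ G)
    (U : Set X) (h : X → X) :
    ∀ z ∈ AttractorOf G gα U h, ∀ g ∈ G, g z ∈ AttractorOf G gα U h := by
  intro z hz g hg V hV hgzV
  -- pull `V` back along `g`, and push the sequence witnessing `z ∈ A` forward along `g`
  obtain ⟨f, hf, hinf⟩ := hz (g ⁻¹' V) (hV.preimage (hcont g hg)) hgzV
  refine ⟨fun k => g ∘ f k, hf.comp_left hcomp hg, hinf.mono ?_⟩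
  rintro k ⟨y, hyV, hy⟩
  exact ⟨g y, hyV, by rw [Set.image_comp]; exact Set.mem_image_of_mem g hy⟩

/-- The attractor determined by a trapping region is invariant under `G`. -/
theorem attractor_invariant {X : Type*} [MetricSpace X] {ι : Type*}
    (G : Set (X → X)) (gα : ι → X → X)
    (hcont : ∀ g ∈ G, Continuous g)
    (hcomp : ∀ f ∈ G, ∀ g ∈ G, f ∘ g ∈ G)
    (hmem : ∀ i, gα i ∈ G)
    (hgen : ∀ f ∈ G, ∃ l : List ι, l ≠ [] ∧ f = wordOf gα l)
    (U : Set X) (h : X → X) (hU : IsTrappingRegion G U h) :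
    ∀ z ∈ AttractorOf G gα U h, ∀ g ∈ G, g z ∈ AttractorOf G gα U h :=
  attractor_invariant_general G gα hcont hcomp U h
end

section
/- Let (X,d) be a compact metric space and let G be an abelian semigroup of continuous self-maps of X generated by a family {g_α}. Then the complement of the chain recurrent set of G equals the union, over all attractors A of G (i.e., attractors determined by trapping regions for G), of the sets B(A) \ A: X \ CR(G) = ⋃_A (B(A) \ A). -/
open Filter Topology

/-!
If `x` is not chain recurrent, some `ε` and `g ∈ G` admit no `(ε, g)`-chain from `x` back to
`x`; the set `U` of points reachable from `x` by `(ε, g)`-chains is then an open trapping region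
for `g` (anything `ε`-close to `Ĝ(g(U))` is reachable by one more step) that misses `x`, and any
cluster point of the orbit `gᵏ x` lies in `ω(x)` and in the attractor of `U`.

Conversely, let `U` be a trapping region for `h` and `x ∈ B(A) \ A`. Since `x ∉ A`, some
neighbourhood `V` of `x` misses `Ĝ(h^{M+1}(U))` for a fixed `M`, and since `ω(x)` meets
`A ⊆ U`, some `k ∈ G` sends `x` into `U`. By compactness a uniform `ε`-thickening of `cl(Ũ)`
stays in `U`, and commutativity lets every `(ε, h^{M+1} ∘ k)`-chain from `x` be rewritten step by
step as jumps from `Ĝ(h^{M+1}(U))` into `U`; its last jump cannot end at `x` once `ε` is smaller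
than the radius of `V`.
-/

open Set Metric

section

variable {X ι : Type*} {G : Set (X → X)} {gα : ι → X → X}

section Semigroup

theorem comp_mem_of_mem_Ghat (hcomp : ∀ f ∈ G, ∀ g ∈ G, f ∘ g ∈ G) {F g : X → X}
    (hF : F ∈ Ghat G) (hg : g ∈ G) : F ∘ g ∈ G := by
  rcases hF with rfl | hF
  · exact hg
  · exact hcomp F hF g hg

theorem iterate_succ_mem (hcomp : ∀ f ∈ G, ∀ g ∈ G, f ∘ g ∈ G) {g : X → X} (hg : g ∈ G)
    (m : ℕ) : g^[m + 1] ∈ G := by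
  induction m with
  | zero => exact hg
  | succ m ih => exact Function.iterate_succ g (m + 1) ▸ hcomp _ ih _ hg

theorem comp_iterate_mem_Ghat (hcomp : ∀ f ∈ G, ∀ g ∈ G, f ∘ g ∈ G) {F g : X → X}
    (hF : F ∈ Ghat G) (hg : g ∈ G) : ∀ m : ℕ, F ∘ g^[m] ∈ Ghat G
  | 0 => hF
  | m + 1 => mem_insert_of_mem _ (comp_mem_of_mem_Ghat hcomp hF (iterate_succ_mem hcomp hg m))

theorem wordOf_mem (hcomp : ∀ f ∈ G, ∀ g ∈ G, f ∘ g ∈ G) (hmem : ∀ i, gα i ∈ G) :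
    ∀ l : List ι, l ≠ [] → wordOf gα l ∈ G
  | [i], _ => hmem i
  | i :: j :: l, _ => hcomp _ (hmem i) _ (wordOf_mem hcomp hmem (j :: l) (List.cons_ne_nil _ _))

theorem exists_eq_comp_of_mem (hcomp : ∀ f ∈ G, ∀ g ∈ G, f ∘ g ∈ G) (hmem : ∀ i, gα i ∈ G)
    (hgen : ∀ f ∈ G, ∃ l : List ι, l ≠ [] ∧ f = wordOf gα l) {g : X → X} (hg : g ∈ G) :
    ∃ i, ∃ b ∈ Ghat G, g = gα i ∘ b := by
  obtain ⟨_ | ⟨i, l⟩, hl, rfl⟩ := hgen g hg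
  · exact absurd rfl hl
  refine ⟨i, wordOf gα l, ?_, rfl⟩
  rcases eq_or_ne l [] with rfl | hl'
  · exact mem_insert _ _
  · exact mem_insert_of_mem _ (wordOf_mem hcomp hmem l hl')

theorem iterWord_eq_comp_iterate (g₀ b : X → X) :
    ∀ (m : ℕ) (hs : ℕ → X → X), (∀ i ≠ 0, hs i = b) →
      IterWord g₀ m hs = hs 0 ∘ (g₀ ∘ b)^[m]
  | 0, _, _ => rfl
  | m + 1, hs, hb => by
    rw [IterWord, iterWord_eq_comp_iterate g₀ b m _ fun i _ => hb (i + 1) i.succ_ne_zero,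
      hb 1 one_ne_zero, Function.iterate_succ']
    rfl

theorem unboundedSeq_comp_iterate (hcomp : ∀ f ∈ G, ∀ g ∈ G, f ∘ g ∈ G)
    (hmem : ∀ i, gα i ∈ G) (hgen : ∀ f ∈ G, ∃ l : List ι, l ≠ [] ∧ f = wordOf gα l)
    {g : X → X} (hg : g ∈ G) {F : ℕ → X → X} (hF : ∀ k, F k ∈ Ghat G) {n : ℕ → ℕ}
    (hn : Tendsto n atTop atTop) : UnboundedSeq G gα (fun k => F k ∘ g^[n k + 1]) := by
  obtain ⟨i, b, hb, rfl⟩ := exists_eq_comp_of_mem hcomp hmem hgen hg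
  refine ⟨fun k => comp_mem_of_mem_Ghat hcomp (hF k) (iterate_succ_mem hcomp hg _),
    i, fun k => n k + 1, (tendsto_add_atTop_nat 1).comp hn, fun k => ?_⟩
  refine ⟨fun j => if j = 0 then F k else b, fun j => ?_, ?_⟩
  · dsimp only
    split_ifs
    exacts [hF k, hb]
  · rw [iterWord_eq_comp_iterate _ b _ _ fun j hj => if_neg hj, if_pos rfl]

theorem unboundedSeq_iterate (hcomp : ∀ f ∈ G, ∀ g ∈ G, f ∘ g ∈ G)
    (hmem : ∀ i, gα i ∈ G) (hgen : ∀ f ∈ G, ∃ l : List ι, l ≠ [] ∧ f = wordOf gα l)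
    {g : X → X} (hg : g ∈ G) {n : ℕ → ℕ} (hn : Tendsto n atTop atTop) :
    UnboundedSeq G gα (fun k => g^[n k + 1]) :=
  unboundedSeq_comp_iterate hcomp hmem hgen hg (F := fun _ => id) (fun _ => mem_insert _ _) hn

end Semigroup

section Chains

variable [MetricSpace X] {ε : ℝ} {g : X → X} {a b : X}

theorem epsChain_of_steps {n : ℕ} {x : ℕ → X} {gs : ℕ → X → X} (h0 : x 0 = a)
    (hgs : ∀ i < n, gs i ∈ Ghat G) (hd : ∀ i < n, dist (gs i (g (x i))) (x (i + 1)) < ε)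
    {F : X → X} (hF : F ∈ Ghat G) (hlast : dist (F (g (x n))) b < ε) : EpsChain G ε g a b := by
  refine ⟨n + 1, n.succ_pos, Function.update x (n + 1) b, Function.update gs n F, ?_,
    Function.update_self .., fun i hi => ?_, fun i hi => ?_⟩
  · rwa [Function.update_of_ne n.succ_ne_zero.symm]
  all_goals rcases Nat.lt_succ_iff_lt_or_eq.1 hi with hi | rfl
  · rw [Function.update_of_ne hi.ne]
    exact hgs i hi
  · rwa [Function.update_self]
  · rw [Function.update_of_ne hi.ne, Function.update_of_ne (by omega),
      Function.update_of_ne (by omega)]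
    exact hd i hi
  · rwa [Function.update_self, Function.update_self, Function.update_of_ne (by omega)]

theorem epsChain_iff_exists_last_step :
    EpsChain G ε g a b ↔
      ∃ w, (w = a ∨ EpsChain G ε g a w) ∧ ∃ F ∈ Ghat G, dist (F (g w)) b < ε := by
  constructor
  · rintro ⟨_ | m, hn, x, gs, h0, rfl, hgs, hd⟩
    · exact absurd hn (lt_irrefl 0)
    refine ⟨x m, ?_, gs m, hgs m m.lt_succ_self, hd m m.lt_succ_self⟩
    rcases Nat.eq_zero_or_pos m with rfl | hm
    · exact Or.inl h0
    · exact Or.inr ⟨m, hm, x, gs, h0, rfl, fun i hi => hgs i (by omega),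
        fun i hi => hd i (by omega)⟩
  · rintro ⟨w, rfl | ⟨n, -, x, gs, h0, rfl, hgs, hd⟩, F, hF, hlast⟩
    · exact epsChain_of_steps (n := 0) (x := fun _ => w) (gs := fun _ => id) rfl
        (fun _ h => absurd h (Nat.not_lt_zero _)) (fun _ h => absurd h (Nat.not_lt_zero _))
        hF hlast
    · exact epsChain_of_steps h0 hgs hd hF hlast

theorem EpsChain.snoc {c : X} (h : EpsChain G ε g a b) {F : X → X} (hF : F ∈ Ghat G)
    (hd : dist (F (g b)) c < ε) : EpsChain G ε g a c :=
  epsChain_iff_exists_last_step.2 ⟨b, Or.inr h, F, hF, hd⟩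

theorem epsChain_apply_self (hε : 0 < ε) : EpsChain G ε g a (g a) :=
  epsChain_iff_exists_last_step.2 ⟨a, Or.inl rfl, id, mem_insert _ _, by simpa using hε⟩

theorem isOpen_setOf_epsChain : IsOpen {b | EpsChain G ε g a b} := by
  have h : {b | EpsChain G ε g a b} =
      ⋃ w ∈ insert a {b | EpsChain G ε g a b}, ⋃ F ∈ Ghat G, ball (F (g w)) ε := by
    ext b
    rw [mem_ofPred_eq, epsChain_iff_exists_last_step]
    simp only [mem_iUnion, mem_insert_iff, mem_ofPred_eq, mem_ball', exists_prop]
  rw [h]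
  exact isOpen_biUnion fun _ _ => isOpen_biUnion fun _ _ => isOpen_ball

theorem isTrappingRegion_setOf_epsChain (hg : g ∈ G) (hε : 0 < ε) :
    IsTrappingRegion G {b | EpsChain G ε g a b} g := by
  refine ⟨isOpen_setOf_epsChain, ⟨g a, epsChain_apply_self hε⟩, hg, fun y hy => ?_⟩
  obtain ⟨_, ⟨u, hu, F, hF, rfl⟩, hyu⟩ := Metric.mem_closure_iff.1 hy ε hε
  exact EpsChain.snoc hu hF (by rwa [dist_comm])

theorem EpsChain.mem_thickening {S T : Set X} (h : EpsChain G ε g a b) (ha : a ∈ S)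
    (hST : ∀ y ∈ S, ∀ F ∈ Ghat G, F (g y) ∈ T) (hTS : thickening ε T ⊆ S) :
    b ∈ thickening ε T := by
  obtain ⟨n, hn, x, gs, h0, rfl, hgs, hd⟩ := h
  have step : ∀ i < n, x i ∈ S → x (i + 1) ∈ thickening ε T := fun i hi hxi =>
    mem_thickening_iff.2 ⟨_, hST _ hxi _ (hgs i hi), by rw [dist_comm]; exact hd i hi⟩
  have reach : ∀ i < n, x (i + 1) ∈ thickening ε T := by
    intro i
    induction i with
    | zero => exact fun hi => step 0 hi (h0 ▸ ha)
    | succ i ih => exact fun hi => step _ hi (hTS (ih (by omega)))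
  obtain ⟨m, rfl⟩ := Nat.exists_eq_succ_of_ne_zero hn.ne'
  exact reach m m.lt_succ_self

end Chains

section Attractors

variable [MetricSpace X] {U : Set X} {h : X → X}

theorem attractorOf_subset_closure (U : Set X) (h : X → X) :
    AttractorOf G gα U h ⊆ closure {y | ∃ x ∈ U, ∃ f ∈ Ghat G, y = f (h x)} := by
  intro z hz
  refine _root_.mem_closure_iff.2 fun V hV hzV => ?_
  obtain ⟨f, hf, hinf⟩ := hz V hV hzV
  obtain ⟨k, y, hyV, _, ⟨u, hu, rfl⟩, rfl⟩ := hinf.nonempty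
  exact ⟨_, hyV, u, hu, f k, mem_insert_of_mem _ (hf.1 k), rfl⟩

theorem IsTrappingRegion.attractorOf_subset (hU : IsTrappingRegion G U h) :
    AttractorOf G gα U h ⊆ U :=
  (attractorOf_subset_closure U h).trans hU.2.2.2

theorem IsTrappingRegion.exists_thickening_subset [CompactSpace X]
    (hU : IsTrappingRegion G U h) :
    ∃ ε > 0, thickening ε {y | ∃ x ∈ U, ∃ f ∈ Ghat G, y = f (h x)} ⊆ U := by
  obtain ⟨ε, hε, hsub⟩ := isClosed_closure.isCompact.exists_thickening_subset_open hU.1 hU.2.2.2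
  exact ⟨ε, hε, (thickening_subset_of_subset ε subset_closure).trans hsub⟩

theorem mem_attractorOf_of_tendsto {u z : X} {f : ℕ → X → X} (hu : u ∈ U)
    (hf : UnboundedSeq G gα f) (hz : Tendsto (fun k => f k (h u)) atTop (𝓝 z)) :
    z ∈ AttractorOf G gα U h := by
  intro V hV hzV
  refine ⟨f, hf, Nat.frequently_atTop_iff_infinite.1 ?_⟩
  exact (hz.eventually (hV.mem_nhds hzV)).frequently.mono fun k hk =>
    ⟨_, hk, mem_image_of_mem _ (mem_image_of_mem _ hu)⟩

theorem exists_isOpen_forall_comp_iterate_notMem (hcomp : ∀ f ∈ G, ∀ g ∈ G, f ∘ g ∈ G)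
    (hmem : ∀ i, gα i ∈ G) (hgen : ∀ f ∈ G, ∃ l : List ι, l ≠ [] ∧ f = wordOf gα l)
    (hh : h ∈ G) {x : X} (hx : x ∉ AttractorOf G gα U h) :
    ∃ V, IsOpen V ∧ x ∈ V ∧ ∃ M : ℕ, ∀ F ∈ Ghat G, ∀ u ∈ U, F (h^[M + 1] u) ∉ V := by
  simp only [AttractorOf, mem_ofPred_eq, not_forall] at hx
  obtain ⟨V, hV, hxV, hfin⟩ := hx
  refine ⟨V, hV, hxV, ?_⟩
  by_contra! hhit
  choose F hF u hu hFV using hhit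
  refine hfin ⟨_, unboundedSeq_comp_iterate hcomp hmem hgen hh (fun k => hF (k + 1)) tendsto_id,
    infinite_univ.mono fun k _ => ?_⟩
  exact ⟨_, hFV (k + 1), mem_image_of_mem _ (mem_image_of_mem _ (hu (k + 1)))⟩

end Attractors

section ChainRecurrence

variable [MetricSpace X] [CompactSpace X]

theorem mem_basinOf_attractorOf_of_apply_mem (hcomp : ∀ f ∈ G, ∀ g ∈ G, f ∘ g ∈ G)
    (hmem : ∀ i, gα i ∈ G) (hgen : ∀ f ∈ G, ∃ l : List ι, l ≠ [] ∧ f = wordOf gα l)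
    {g : X → X} (hg : g ∈ G) {U : Set X} {x : X} (hgx : g x ∈ U) :
    x ∈ BasinOf G gα (AttractorOf G gα U g) := by
  obtain ⟨z, -, φ, hφ, hz⟩ :=
    isCompact_univ.tendsto_subseq (x := fun k => g^[k + 1] (g (g x))) fun _ => mem_univ _
  have hφ' := hφ.tendsto_atTop
  have hshift : ∀ k, g^[φ k + 2 + 1] x = g^[φ k + 1] (g (g x)) := fun k =>
    Function.iterate_add_apply g (φ k + 1) 2 x
  refine ⟨z, ⟨fun k => g^[φ k + 2 + 1],
    unboundedSeq_iterate hcomp hmem hgen hg ((tendsto_add_atTop_nat 2).comp hφ'), ?_⟩,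
    mem_attractorOf_of_tendsto hgx (unboundedSeq_iterate hcomp hmem hgen hg hφ') hz⟩
  simpa only [hshift, Function.comp_def] using hz

theorem exists_isTrappingRegion_of_not_chainRecurrentPt (hcomp : ∀ f ∈ G, ∀ g ∈ G, f ∘ g ∈ G)
    (hmem : ∀ i, gα i ∈ G) (hgen : ∀ f ∈ G, ∃ l : List ι, l ≠ [] ∧ f = wordOf gα l)
    {x : X} (hx : ¬ ChainRecurrentPt G x) :
    ∃ U h, IsTrappingRegion G U h ∧
      x ∈ BasinOf G gα (AttractorOf G gα U h) \ AttractorOf G gα U h := by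
  obtain ⟨ε, hε, g, hg, hxx⟩ : ∃ ε > 0, ∃ g ∈ G, ¬ EpsChain G ε g x x := by
    simpa [ChainRecurrentPt] using hx
  have hU := isTrappingRegion_setOf_epsChain (a := x) hg hε
  exact ⟨_, g, hU, mem_basinOf_attractorOf_of_apply_mem hcomp hmem hgen hg (epsChain_apply_self hε),
    fun hA => hxx (hU.attractorOf_subset hA)⟩

theorem not_chainRecurrentPt_of_mem_basinOf_diff (hcomp : ∀ f ∈ G, ∀ g ∈ G, f ∘ g ∈ G)
    (habel : ∀ f ∈ G, ∀ g ∈ G, f ∘ g = g ∘ f) (hmem : ∀ i, gα i ∈ G)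
    (hgen : ∀ f ∈ G, ∃ l : List ι, l ≠ [] ∧ f = wordOf gα l)
    {U : Set X} {h : X → X} (hU : IsTrappingRegion G U h) {x : X}
    (hx : x ∈ BasinOf G gα (AttractorOf G gα U h) \ AttractorOf G gα U h) :
    ¬ ChainRecurrentPt G x := by
  intro hCR
  obtain ⟨⟨z, ⟨f, hf, hfz⟩, hzA⟩, hxA⟩ := hx
  have hh := hU.2.2.1
  obtain ⟨V, hV, hxV, M, hM⟩ := exists_isOpen_forall_comp_iterate_notMem hcomp hmem hgen hh hxA
  obtain ⟨K, hK⟩ := (hfz.eventually (hU.1.mem_nhds (hU.attractorOf_subset hzA))).exists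
  obtain ⟨ε, hε, hεU⟩ := hU.exists_thickening_subset
  obtain ⟨r, hr, hrV⟩ := isOpen_iff.1 hV x hxV
  set T := {y | ∃ F ∈ Ghat G, ∃ u ∈ U, y = F (h^[M + 1] u)}
  have hTU : thickening ε T ⊆ U := by
    refine (thickening_subset_of_subset ε ?_).trans hεU
    rintro _ ⟨F, hF, u, hu, rfl⟩
    exact ⟨u, hu, F ∘ h^[M], comp_iterate_mem_Ghat hcomp hF hh M, rfl⟩
  have hhM := iterate_succ_mem hcomp hh M
  have hST : ∀ y ∈ insert x U, ∀ F ∈ Ghat G, F ((h^[M + 1] ∘ f K) y) ∈ T := by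
    rintro y (rfl | hy) F hF
    · exact ⟨F, hF, _, hK, rfl⟩
    · refine ⟨F ∘ f K, mem_insert_of_mem _ (comp_mem_of_mem_Ghat hcomp hF (hf.1 K)), y, hy, ?_⟩
      rw [habel _ hhM _ (hf.1 K)]
      rfl
  have hchain := hCR (min ε r) (lt_min hε hr) _ (hcomp _ hhM _ (hf.1 K))
  obtain ⟨_, ⟨F, hF, u, hu, rfl⟩, hxt⟩ := mem_thickening_iff.1 <| hchain.mem_thickening
    (mem_insert x U) hST ((thickening_mono (min_le_left ε r) T).trans (hTU.trans (subset_insert x U)))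
  exact hM F hF u hu (hrV (mem_ball'.2 (hxt.trans_le (min_le_right ε r))))

end ChainRecurrence

end

theorem compl_chainRecurrent_eq_iUnion_basin_diff_attractor_general
    {X : Type*} [MetricSpace X] [CompactSpace X] {ι : Type*}
    (G : Set (X → X)) (gα : ι → X → X)
    (hcomp : ∀ f ∈ G, ∀ g ∈ G, f ∘ g ∈ G)
    (habel : ∀ f ∈ G, ∀ g ∈ G, f ∘ g = g ∘ f)
    (hmem : ∀ i, gα i ∈ G)
    (hgen : ∀ f ∈ G, ∃ l : List ι, l ≠ [] ∧ f = wordOf gα l) :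
    {x : X | ChainRecurrentPt G x}ᶜ =
      ⋃ (U : Set X) (h : X → X) (_ : IsTrappingRegion G U h),
        (BasinOf G gα (AttractorOf G gα U h) \ AttractorOf G gα U h) := by
  ext x
  simp only [mem_compl_iff, mem_ofPred_eq, mem_iUnion, exists_prop]
  exact ⟨exists_isTrappingRegion_of_not_chainRecurrentPt hcomp hmem hgen,
    fun ⟨_, _, hU, hx⟩ => not_chainRecurrentPt_of_mem_basinOf_diff hcomp habel hmem hgen hU hx⟩

/-- Conley–Hurley characterization for an abelian semigroup on a compact metric
space: the complement of the chain recurrent set is the union, over all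
attractors `A` of `G` (determined by trapping regions `U` with associated map
`h`), of `B(A) \ A`. -/
theorem compl_chainRecurrent_eq_iUnion_basin_diff_attractor
    {X : Type*} [MetricSpace X] [CompactSpace X] {ι : Type*}
    (G : Set (X → X)) (gα : ι → X → X)
    (hcont : ∀ g ∈ G, Continuous g)
    (hcomp : ∀ f ∈ G, ∀ g ∈ G, f ∘ g ∈ G)
    (habel : ∀ f ∈ G, ∀ g ∈ G, f ∘ g = g ∘ f)
    (hmem : ∀ i, gα i ∈ G)
    (hgen : ∀ f ∈ G, ∃ l : List ι, l ≠ [] ∧ f = wordOf gα l) :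
    {x : X | ChainRecurrentPt G x}ᶜ =
      ⋃ (U : Set X) (h : X → X) (_ : IsTrappingRegion G U h),
        (BasinOf G gα (AttractorOf G gα U h) \ AttractorOf G gα U h) :=
  compl_chainRecurrent_eq_iUnion_basin_diff_attractor_general G gα hcomp habel hmem hgen
end

section
/- Let X = {z ∈ ℂ : |z| ≤ 1} be the closed unit disc with the metric induced from ℂ, and let G = {g_n : n ∈ ℕ, n ≥ 2} be the semigroup of self-maps of X given by g_n(z) = zⁿ. Then the chain recurrent set of G is CR(G) = {z ∈ X : |z| = 0 or |z| = 1}, i.e., the union of {0} and the unit circle. -/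
/-- The closed unit disc in the complex plane, as a metric space. -/
def UnitDisc : Type := {z : ℂ // ‖z‖ ≤ 1}

noncomputable instance : MetricSpace UnitDisc :=
  Subtype.metricSpace

/-- The self-map `z ↦ zⁿ` of the closed unit disc. -/
def powMap (n : ℕ) : UnitDisc → UnitDisc := fun z =>
  ⟨z.1 ^ n, by
    have hz := z.2
    calc ‖z.1 ^ n‖ = ‖z.1‖ ^ n := norm_pow _ _
      _ ≤ 1 := pow_le_one₀ (norm_nonneg _) hz⟩

/-- The semigroup `G = {g_n : n ≥ 2}` of the maps `g_n(z) = zⁿ` on the closed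
unit disc. -/
def powSemigroup : Set (UnitDisc → UnitDisc) :=
  {f | ∃ n : ℕ, 2 ≤ n ∧ f = powMap n}

/-!
If `0 < |z| = r < 1`, every map of `Ĝ` is non-expanding in modulus, so after `w ↦ w²` and a jump
shorter than `r - r²` a chain starting in `|w| ≤ r` lands in `|w| < r`: it never returns to `z`.
Conversely, a point `x` in the closure of the periodic points of a map `g` continuous at `x` is
chain recurrent: jump from `g x` to `g p` for a periodic `p` near `x`, follow the orbit of `p`
exactly, and jump from `p` back to `x`. The origin is fixed by every `w ↦ wᵐ`, and on the unit
circle the periodic points of `w ↦ wᵐ` include the `(mᵏ - 1)`-th roots of unity, which are dense.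
-/

open Function

section Chains

variable {X : Type*} [MetricSpace X] {G : Set (X → X)} {ε : ℝ} {g : X → X}

theorem EpsChain.mem_of_absorbing {U V : Set X} {a b : X} (hVU : V ⊆ U)
    (hUV : ∀ x ∈ U, ∀ h ∈ Ghat G, ∀ y, dist (h (g x)) y < ε → y ∈ V)
    (hab : EpsChain G ε g a b) (ha : a ∈ U) : b ∈ V := by
  obtain ⟨n, hn, x, gs, rfl, rfl, hgs, hdist⟩ := hab
  have hsucc : ∀ i < n, x (i + 1) ∈ V := by
    intro i
    induction i with
    | zero => exact fun h0 => hUV _ ha _ (hgs 0 h0) _ (hdist 0 h0)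
    | succ i ih => exact fun hi => hUV _ (hVU (ih (by omega))) _ (hgs _ hi) _ (hdist _ hi)
  obtain ⟨n, rfl⟩ := Nat.exists_eq_succ_of_ne_zero hn.ne'
  exact hsucc n n.lt_succ_self

theorem epsChain_of_dist_iterate_lt {a b p : X} {k : ℕ} (hk : 2 ≤ k)
    (ha : dist (g a) (g p) < ε) (hb : dist (g^[k] p) b < ε) : EpsChain G ε g a b := by
  refine ⟨k, by omega, fun i => if i = 0 then a else if i = k then b else g^[i] p, fun _ => id,
    by simp, by simp; omega, fun _ _ => Set.mem_insert _ _, fun i hi => ?_⟩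
  dsimp only [id]
  rcases Nat.eq_zero_or_pos i with rfl | hi0
  · simpa [show 1 ≠ k by omega] using ha
  rw [if_neg hi0.ne', if_neg (by omega), ← iterate_succ_apply' g i p, if_neg (by omega)]
  by_cases hik : i + 1 = k
  · rw [if_pos hik]
    rwa [← hik] at hb
  · rw [if_neg hik, dist_self]
    exact dist_nonneg.trans_lt ha

theorem chainRecurrentPt_of_mem_closure_periodicPts {x : X}
    (hx : ∀ g ∈ G, ContinuousAt g x ∧ x ∈ closure (periodicPts g)) : ChainRecurrentPt G x := by
  intro ε hε g hg
  obtain ⟨hcont, hper⟩ := hx g hg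
  obtain ⟨δ, hδ, hgδ⟩ := Metric.continuousAt_iff.mp hcont ε hε
  obtain ⟨p, ⟨n, hn, hp⟩, hxp⟩ := Metric.mem_closure_iff.mp hper (min δ ε) (lt_min hδ hε)
  refine epsChain_of_dist_iterate_lt (p := p) (k := n * 2) (by omega) ?_ ?_
  · rw [dist_comm] at hxp ⊢
    exact hgδ (hxp.trans_le (min_le_left _ _))
  · rw [(hp.mul_const 2).eq, dist_comm]
    exact hxp.trans_le (min_le_right _ _)

end Chains

open Complex in
theorem exists_pow_eq_one_norm_sub_le {z : ℂ} (hz : ‖z‖ = 1) {N : ℕ} (hN : N ≠ 0) :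
    ∃ p : ℂ, p ^ N = 1 ∧ ‖z - p‖ ≤ Real.pi / N := by
  set θ := arg z
  set j := round (θ * N / (2 * Real.pi))
  set t : ℝ := 2 * Real.pi * j / N
  have hN' : (N : ℝ) ≠ 0 := Nat.cast_ne_zero.mpr hN
  refine ⟨exp (t * I), ?_, ?_⟩
  · rw [← exp_nat_mul, ← exp_int_mul_two_pi_mul_I j]
    congr 1
    simp only [t]
    push_cast
    field_simp
  · have hz' : z = exp (θ * I) := by simpa [hz] using (norm_mul_exp_arg_mul_I z).symm
    calc ‖z - exp (t * I)‖ = ‖exp (I * ↑(θ - t)) - 1‖ := by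
          have hsplit : exp (θ * I) - exp (t * I) = exp (t * I) * (exp (I * ↑(θ - t)) - 1) := by
            rw [mul_sub, ← exp_add, mul_one]
            push_cast
            ring_nf
          rw [hz', hsplit, norm_mul, norm_exp_ofReal_mul_I, one_mul]
      _ ≤ ‖θ - t‖ := Real.norm_exp_I_mul_ofReal_sub_one_le
      _ = 2 * Real.pi / N * |θ * N / (2 * Real.pi) - j| := by
          rw [Real.norm_eq_abs, ← abs_of_pos (by positivity : 0 < 2 * Real.pi / N), ← abs_mul]
          congr 1
          simp only [t]
          field_simp
      _ ≤ 2 * Real.pi / N * (1 / 2) := by gcongr; exact abs_sub_round _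
      _ = Real.pi / N := by ring

namespace UnitDisc

theorem dist_eq (a b : UnitDisc) : dist a b = ‖a.1 - b.1‖ :=
  Complex.dist_eq a.1 b.1

end UnitDisc

@[simp]
theorem powMap_val (n : ℕ) (z : UnitDisc) : (powMap n z).1 = z.1 ^ n := rfl

theorem powMap_iterate_val (n k : ℕ) (z : UnitDisc) : ((powMap n)^[k] z).1 = z.1 ^ n ^ k := by
  induction k with
  | zero => simp
  | succ k ih => rw [iterate_succ_apply', powMap_val, ih, ← pow_mul, ← pow_succ]

theorem continuous_powMap (n : ℕ) : Continuous (powMap n) :=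
  (continuous_subtype_val.pow n).subtype_mk _

theorem norm_apply_le_of_mem_Ghat {h : UnitDisc → UnitDisc} (hh : h ∈ Ghat powSemigroup)
    (z : UnitDisc) : ‖(h z).1‖ ≤ ‖z.1‖ := by
  rcases hh with rfl | ⟨n, hn, rfl⟩
  · exact le_rfl
  · rw [powMap_val, norm_pow]
    exact pow_le_of_le_one (norm_nonneg _) z.2 (by omega)

theorem not_chainRecurrentPt_of_norm_pos_of_lt_one {z : UnitDisc} (h0 : 0 < ‖z.1‖)
    (h1 : ‖z.1‖ < 1) : ¬ ChainRecurrentPt powSemigroup z := by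
  set r := ‖z.1‖
  have habsorb : ∀ w ∈ {w : UnitDisc | ‖w.1‖ ≤ r}, ∀ h ∈ Ghat powSemigroup, ∀ y,
      dist (h (powMap 2 w)) y < r - r ^ 2 → y ∈ {w : UnitDisc | ‖w.1‖ < r} := by
    intro w hw h hh y hy
    have hsq : ‖(h (powMap 2 w)).1‖ ≤ r ^ 2 :=
      calc ‖(h (powMap 2 w)).1‖ ≤ ‖w.1‖ ^ 2 := by
            simpa [norm_pow] using norm_apply_le_of_mem_Ghat hh (powMap 2 w)
        _ ≤ r ^ 2 := by gcongr; exact hw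
    rw [dist_comm, UnitDisc.dist_eq] at hy
    calc ‖y.1‖ ≤ ‖(h (powMap 2 w)).1‖ + ‖y.1 - (h (powMap 2 w)).1‖ := norm_le_insert' _ _
      _ < r := by linarith
  intro hz
  have hzr := (hz (r - r ^ 2) (by nlinarith) (powMap 2) ⟨2, le_rfl, rfl⟩).mem_of_absorbing
    (U := {w : UnitDisc | ‖w.1‖ ≤ r}) (V := {w : UnitDisc | ‖w.1‖ < r})
    (fun _ (hw : ‖_‖ < r) => hw.le) habsorb (le_refl r)
  exact lt_irrefl r hzr

theorem mem_closure_periodicPts_powMap {m : ℕ} (hm : 2 ≤ m) {z : UnitDisc} (hz : ‖z.1‖ = 1) :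
    z ∈ closure (periodicPts (powMap m)) := by
  refine Metric.mem_closure_iff.mpr fun δ hδ => ?_
  obtain ⟨n, hn⟩ := exists_nat_gt (Real.pi / δ)
  have hn0 : 0 < n := by exact_mod_cast (div_pos Real.pi_pos hδ).trans hn
  have hnN : n ≤ m ^ n - 1 := by have := Nat.lt_pow_self (n := n) (by omega : 1 < m); omega
  obtain ⟨p, hpN, hzp⟩ := exists_pow_eq_one_norm_sub_le hz (by omega : m ^ n - 1 ≠ 0)
  obtain ⟨q, rfl⟩ : ∃ q : UnitDisc, q.1 = p :=
    ⟨⟨p, (Complex.norm_eq_one_of_pow_eq_one hpN (by omega)).le⟩, rfl⟩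
  refine ⟨q, mk_mem_periodicPts hn0 ?_, ?_⟩
  · refine Subtype.ext ?_
    rw [powMap_iterate_val, ← Nat.sub_add_cancel (Nat.one_le_pow n m (by omega)), pow_succ, hpN,
      one_mul]
  · rw [UnitDisc.dist_eq]
    refine hzp.trans_lt ((div_le_div_of_nonneg_left Real.pi_pos.le (Nat.cast_pos.mpr hn0)
      (Nat.cast_le.mpr hnN)).trans_lt ?_)
    rwa [div_lt_iff₀ (by exact_mod_cast hn0), mul_comm, ← div_lt_iff₀ hδ]

/-- The chain recurrent set of the semigroup `{z ↦ zⁿ : n ≥ 2}` on the closed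
unit disc is `{z : |z| = 0 or |z| = 1}`, the union of the origin and the unit
circle. -/
theorem chainRecurrent_powSemigroup :
    {z : UnitDisc | ChainRecurrentPt powSemigroup z} =
      {z : UnitDisc | ‖z.1‖ = 0 ∨ ‖z.1‖ = 1} := by
  ext z
  simp only [Set.mem_ofPred_eq]
  refine ⟨fun hz => ?_, fun hz => chainRecurrentPt_of_mem_closure_periodicPts ?_⟩
  · by_contra hne
    rw [not_or] at hne
    exact not_chainRecurrentPt_of_norm_pos_of_lt_one
      ((norm_nonneg _).lt_of_ne (Ne.symm hne.1)) (z.2.lt_of_ne hne.2) hz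
  · rintro _ ⟨m, hm, rfl⟩
    refine ⟨(continuous_powMap m).continuousAt, ?_⟩
    rcases hz with hz | hz
    · have hfix : IsFixedPt (powMap m) z := Subtype.ext (by simp [norm_eq_zero.mp hz]; omega)
      exact subset_closure (mk_mem_periodicPts one_pos (hfix.isPeriodicPt 1))
    · exact mem_closure_periodicPts_powMap hm hz
end

section
/- Let X = {z ∈ ℂ : |z| ≤ 1} be the closed unit disc and let G = {g_n : n ∈ ℕ, n ≥ 2} be the semigroup of self-maps of X given by g_n(z) = zⁿ. Then no point z with 0 < |z| < 1 is chain recurrent for G: for each such z there exist ε > 0 and g ∈ G such that there is no (ε,g)-chain from z to itself. -/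
/-!
With `r = |z|` and `ε = r - r²`, the closed disc of radius `r` is an attracting block: every
`f ∈ Ĝ` satisfies `|f(w)| ≤ |w|`, so `|f(w²)| ≤ r²` whenever `|w| ≤ r`, and an `ε`-jump from
there lands strictly inside the disc of radius `r`. Hence every point of an `(ε, g₂)`-chain
starting at `z` after the first has modulus `< r`, and the chain cannot return to `z`.
-/

open Metric in
theorem not_epsChain_of_ball_subset {X : Type*} [MetricSpace X] {G : Set (X → X)} {ε : ℝ}
    {g : X → X} {S T : Set X} (hTS : T ⊆ S)
    (hST : ∀ x ∈ S, ∀ f ∈ Ghat G, ball (f (g x)) ε ⊆ T)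
    {a b : X} (ha : a ∈ S) (hb : b ∉ T) : ¬ EpsChain G ε g a b := by
  rintro ⟨n, hn, x, gs, hx0, hxn, hgs, hdist⟩
  have hstep : ∀ i < n, x i ∈ S → x (i + 1) ∈ T := fun i hi hxi =>
    hST _ hxi _ (hgs i hi) (mem_ball'.mpr (hdist i hi))
  have hxS : ∀ i ≤ n, x i ∈ S := by
    intro i hi
    induction i with
    | zero => exact hx0 ▸ ha
    | succ i ih => exact hTS (hstep i hi (ih (by omega)))
  obtain ⟨m, rfl⟩ : ∃ m, n = m + 1 := ⟨n - 1, by omega⟩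
  exact hb (hxn ▸ hstep m (by omega) (hxS m (by omega)))

theorem norm_powMap (n : ℕ) (w : UnitDisc) : ‖(powMap n w).1‖ = ‖w.1‖ ^ n :=
  norm_pow _ _

theorem norm_apply_le_of_mem_Ghat_powSemigroup {f : UnitDisc → UnitDisc}
    (hf : f ∈ Ghat powSemigroup) (w : UnitDisc) : ‖(f w).1‖ ≤ ‖w.1‖ := by
  rcases hf with rfl | ⟨m, hm, rfl⟩
  · exact le_rfl
  · rw [norm_powMap]
    exact pow_le_of_le_one (norm_nonneg _) w.2 (by omega)

theorem not_epsChain_powMap_two (z : UnitDisc) :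
    ¬ EpsChain powSemigroup (‖z.1‖ - ‖z.1‖ ^ 2) (powMap 2) z z := by
  set r := ‖z.1‖
  refine not_epsChain_of_ball_subset (S := {w : UnitDisc | ‖w.1‖ ≤ r})
    (T := {w | ‖w.1‖ < r})
    (fun _ (h : _ < r) => h.le) ?_ (le_refl r) (lt_irrefl r)
  intro w (hw : ‖w.1‖ ≤ r) f hf y hy
  have hfw : ‖(f (powMap 2 w)).1‖ ≤ r ^ 2 := by
    calc ‖(f (powMap 2 w)).1‖ ≤ ‖w.1‖ ^ 2 :=
          norm_powMap 2 w ▸ norm_apply_le_of_mem_Ghat_powSemigroup hf _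
      _ ≤ r ^ 2 := pow_le_pow_left₀ (norm_nonneg _) hw 2
  have hy' : ‖y.1 - (f (powMap 2 w)).1‖ < r - r ^ 2 := by
    rwa [← dist_eq_norm]
  show ‖y.1‖ < r
  linarith [norm_le_norm_add_norm_sub' y.1 (f (powMap 2 w)).1]

/-- No point `z` of the closed unit disc with `0 < |z| < 1` is chain recurrent
for the semigroup `{z ↦ zⁿ : n ≥ 2}`: for each such `z` there are `ε > 0` and
`g ∈ G` with no `(ε, g)`-chain from `z` to itself. -/
theorem not_chainRecurrent_of_mem_openUnitDisc (z : UnitDisc)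
    (h0 : 0 < ‖z.1‖) (h1 : ‖z.1‖ < 1) :
    ¬ ChainRecurrentPt powSemigroup z ∧
      ∃ ε > (0 : ℝ), ∃ g ∈ powSemigroup, ¬ EpsChain powSemigroup ε g z z := by
  have hε : 0 < ‖z.1‖ - ‖z.1‖ ^ 2 := by nlinarith
  have hg : powMap 2 ∈ powSemigroup := ⟨2, le_rfl, rfl⟩
  have hchain := not_epsChain_powMap_two z
  exact ⟨fun h => hchain (h _ hε _ hg), _, hε, _, hg, hchain⟩
end
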